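/- arXiv:2509.22240 — 3 statements merged into one kernel-verified Lean document; each statement's English description precedes it below -/
import Mathlib

section
/- Let R₁, …, R_{n+1} be exchangeable real random variables, and let β̂ be the ⌈(1−α)(n+1)⌉-th smallest value among R₁, …, R_n, where α ∈ (0,1) and ⌈(1−α)(n+1)⌉ ≤ n. Then P(R_{n+1} ≤ β̂) ≥ 1 − α. -/
open MeasureTheory Finset
open scoped ENNReal NNReal

lemma card_filter_perm {m : ℕ} (σ : Equiv.Perm (Fin m)) (p : Fin m → Prop) [DecidablePred p] :
    #(univ.filter fun i => p (σ i)) = #(univ.filter p) := by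
  rw [← Finset.card_map σ.toEmbedding]
  congr 1
  ext j
  simp [Equiv.eq_symm_apply]

lemma card_filter_val_lt {m k : ℕ} (hk : k ≤ m) :
    #(univ.filter fun b : Fin m => (b : ℕ) < k) = k := by
  have : (univ.filter fun b : Fin m => (b : ℕ) < k) = Finset.map (Fin.castLEEmb hk) univ := by
    ext j
    simp only [Finset.mem_map, Finset.mem_univ, Finset.mem_filter, true_and]
    constructor
    · intro hj; exact ⟨⟨j, hj⟩, by simp [Fin.castLEEmb, Fin.ext_iff]⟩
    · rintro ⟨a, rfl⟩; simpa using a.isLt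
  rw [this, Finset.card_map, Finset.card_univ, Fintype.card_fin]

lemma count_low_rank {m : ℕ} (y : Fin m → ℝ) (k : ℕ) (hk : k ≤ m) :
    k ≤ #(univ.filter fun j : Fin m => #(univ.filter fun i => y i < y j) < k) := by
  set τ := Tuple.sort y with hτ
  have hmono := Tuple.monotone_sort y
  set A := (univ.filter fun a : Fin m => (a : ℕ) < k).image τ with hA
  have hcardA : #A = k := by
    rw [hA, Finset.card_image_of_injective _ τ.injective, card_filter_val_lt hk]
  have hsub : A ⊆ univ.filter fun j : Fin m => #(univ.filter fun i => y i < y j) < k := by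
    intro j hj
    simp only [hA, mem_image, mem_filter, mem_univ, true_and] at hj
    simp only [mem_filter, mem_univ, true_and]
    obtain ⟨a, ha, rfl⟩ := hj
    have hmem : τ a ∈ A := by
      simp only [hA, mem_image, mem_filter, mem_univ, true_and]
      exact ⟨a, ha, rfl⟩
    calc #(univ.filter fun i => y i < y (τ a))
        ≤ #(A \ {τ a}) := by
          apply Finset.card_le_card
          intro i hi
          simp only [mem_filter, mem_univ, true_and] at hi
          simp only [mem_sdiff, mem_singleton]
          constructor
          · simp only [hA, mem_image, mem_filter, mem_univ, true_and]
            refine ⟨τ.symm i, ?_, by simp⟩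
            by_contra hge
            push_neg at hge
            have hle : y (τ a) ≤ y i := by
              have := hmono (a := a) (b := τ.symm i) (by
                have : (a:ℕ) ≤ (τ.symm i : ℕ) := le_trans (le_of_lt ha) hge
                exact_mod_cast this)
              simpa [hτ] using this
            exact absurd hi (not_lt.mpr hle)
          · rintro rfl; exact lt_irrefl _ hi
      _ = k - 1 := by rw [Finset.card_sdiff_of_subset (by simpa using hmem), hcardA]; simp
      _ < k := Nat.sub_lt (Nat.pos_of_ne_zero (by rintro rfl; exact Nat.not_lt_zero _ ha)) one_pos
  calc k = #A := hcardA.symm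
    _ ≤ _ := Finset.card_le_card hsub

lemma countP_ofFn {n : ℕ} (f : Fin n → ℝ) (p : ℝ → Prop) [DecidablePred p] :
    (List.ofFn f).countP (fun b => decide (p b)) = #(univ.filter fun i => p (f i)) := by
  have h1 : (Multiset.map f (univ : Finset (Fin n)).val) = ↑(List.ofFn f) := by
    rw [List.ofFn_eq_map]; rfl
  rw [show ((List.ofFn f).countP fun b => decide (p b)) = Multiset.countP p ↑(List.ofFn f) from
    (Multiset.coe_countP _ _).symm, ← h1, Multiset.countP_map]
  rfl

lemma sorted_getD_ge {l : List ℝ} {x : ℝ} {k : ℕ} (hk1 : 1 ≤ k) (hkl : k ≤ l.length)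
    (hcount : l.countP (fun b => decide (b < x)) < k) :
    x ≤ ((Multiset.ofList l).sort (· ≤ ·)).getD (k - 1) 0 := by
  set s := (Multiset.ofList l).sort (· ≤ ·) with hs
  have hsort : s.Pairwise (· ≤ ·) := Multiset.pairwise_sort _ _
  have hperm : s.Perm l := Multiset.coe_eq_coe.mp (Multiset.sort_eq _ _)
  have hlen : s.length = l.length := hperm.length_eq
  have hlt : k - 1 < s.length := by omega
  rw [List.getD_eq_getElem _ _ hlt]
  by_contra hcon
  push_neg at hcon
  have hcount' : k ≤ s.countP (fun b => decide (b < x)) := by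
    have htake : (s.take k).countP (fun b => decide (b < x)) = k := by
      rw [List.countP_eq_length.mpr, List.length_take]
      · omega
      · intro a ha
        rw [List.mem_take_iff_getElem] at ha
        obtain ⟨i, hi, rfl⟩ := ha
        have hile : i ≤ k - 1 := by omega
        have : s[i] ≤ s[k-1] := by
          rcases eq_or_lt_of_le hile with h | h
          · subst h; rfl
          · exact List.Pairwise.rel_get_of_lt hsort (a := ⟨i, by omega⟩) (b := ⟨k-1, hlt⟩) h
        simpa using lt_of_le_of_lt this hcon
    calc k = (s.take k).countP (fun b => decide (b < x)) := htake.symm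
      _ ≤ _ := by
        conv_rhs => rw [← List.take_append_drop k s]
        rw [List.countP_append]; omega
  rw [hperm.countP_eq] at hcount'
  omega

/-- split-conformal quantile lemma. For exchangeable real random
variables `R₁, …, R_{n+1}`, if `β̂` is the `⌈(1-α)(n+1)⌉`-th smallest among
`R₁, …, R_n` and `⌈(1-α)(n+1)⌉ ≤ n`, then `P(R_{n+1} ≤ β̂) ≥ 1 - α`. -/
theorem split_conformal_quantile_coverage
    {Ω : Type*} [MeasurableSpace Ω] (μ : Measure Ω) [IsProbabilityMeasure μ]
    (n : ℕ) (hn : 1 ≤ n) (R : Fin (n + 1) → Ω → ℝ)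
    (hmeas : ∀ i, Measurable (R i))
    (hexch : ∀ σ : Equiv.Perm (Fin (n + 1)),
      Measure.map (fun ω => fun i => R (σ i) ω) μ =
        Measure.map (fun ω => fun i => R i ω) μ)
    (α : ℝ) (hα₀ : 0 < α) (hα₁ : α < 1)
    (k : ℕ) (hk : k = ⌈(1 - α) * (n + 1 : ℝ)⌉₊) (hkn : k ≤ n)
    (βhat : Ω → ℝ)
    (hβhat : ∀ ω, βhat ω =
      ((Multiset.ofList (List.ofFn fun i : Fin n => R i.castSucc ω)).sort (· ≤ ·)).getD
        (k - 1) 0) :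
    ENNReal.ofReal (1 - α) ≤ μ {ω | R (Fin.last n) ω ≤ βhat ω} := by
  classical
  have hk1 : 1 ≤ k := by
    rw [hk]
    exact Nat.ceil_pos.mpr (mul_pos (by linarith) (by positivity))
  set E : Fin (n+1) → Set Ω := fun j => {ω | #(univ.filter fun i => R i ω < R j ω) < k}
    with hE
  have hcmeas : ∀ j, Measurable fun ω => (#(univ.filter fun i => R i ω < R j ω)) := by
    intro j
    have : (fun ω => (#(univ.filter fun i => R i ω < R j ω)))
        = fun ω => ∑ i : Fin (n+1), if R i ω < R j ω then 1 else 0 := by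
      funext ω; exact Finset.card_filter _ _
    rw [this]
    exact Finset.measurable_sum _ (fun i _ =>
      Measurable.ite (measurableSet_lt (hmeas i) (hmeas j)) measurable_const measurable_const)
  have hEmeas : ∀ j, MeasurableSet (E j) := fun j => (hcmeas j) measurableSet_Iio
  set S : Set (Fin (n+1) → ℝ) :=
    {x | #(univ.filter fun i => x i < x (Fin.last n)) < k} with hS
  have hSmeas : MeasurableSet S := by
    have hc : Measurable fun x : Fin (n+1) → ℝ =>
        (#(univ.filter fun i => x i < x (Fin.last n))) := by
      have : (fun x : Fin (n+1) → ℝ => (#(univ.filter fun i => x i < x (Fin.last n))))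
          = fun x => ∑ i : Fin (n+1), if x i < x (Fin.last n) then 1 else 0 := by
        funext x; exact Finset.card_filter _ _
      rw [this]
      exact Finset.measurable_sum _ (fun i _ =>
        Measurable.ite (measurableSet_lt (measurable_pi_apply i) (measurable_pi_apply _))
          measurable_const measurable_const)
    exact hc measurableSet_Iio
  have hmap : ∀ g : Fin (n+1) → Fin (n+1), Measurable fun ω => fun i => R (g i) ω :=
    fun g => measurable_pi_lambda _ fun i => hmeas (g i)
  have hEdist : ∀ j, μ (E j) = μ (E (Fin.last n)) := by
    intro j
    have h1 : (fun ω => fun i => R ((Equiv.swap j (Fin.last n)) i) ω) ⁻¹' S = E j := by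
      ext ω
      simp only [hS, hE, Set.mem_preimage, Set.mem_setOf_eq]
      have hcard : #(univ.filter fun i =>
            R ((Equiv.swap j (Fin.last n)) i) ω < R ((Equiv.swap j (Fin.last n)) (Fin.last n)) ω)
          = #(univ.filter fun i => R i ω < R j ω) := by
        simp only [Equiv.swap_apply_right]
        exact card_filter_perm (Equiv.swap j (Fin.last n)) (fun i => R i ω < R j ω)
      rw [hcard]
    have h2 : (fun ω => fun i => R i ω) ⁻¹' S = E (Fin.last n) := rfl
    calc μ (E j)
        = Measure.map (fun ω => fun i => R ((Equiv.swap j (Fin.last n)) i) ω) μ S := by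
          rw [Measure.map_apply (hmap _) hSmeas, h1]
      _ = Measure.map (fun ω => fun i => R i ω) μ S := by rw [hexch]
      _ = μ (E (Fin.last n)) := by
          rw [Measure.map_apply (measurable_pi_lambda _ fun i => hmeas i) hSmeas, h2]
  have hpt : ∀ ω, (k : ℝ≥0∞) ≤ ∑ j : Fin (n+1), (E j).indicator (fun _ => (1:ℝ≥0∞)) ω := by
    intro ω
    have h := count_low_rank (fun i => R i ω) k (by omega)
    calc (k:ℝ≥0∞)
        ≤ (#(univ.filter fun j : Fin (n+1) =>
            #(univ.filter fun i => R i ω < R j ω) < k) : ℝ≥0∞) := by exact_mod_cast h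
      _ = ∑ j : Fin (n+1), (E j).indicator (fun _ => (1:ℝ≥0∞)) ω := by
          rw [Finset.card_filter, Nat.cast_sum]
          apply Finset.sum_congr rfl
          intro j _
          simp only [Set.indicator_apply, hE, Set.mem_setOf_eq, Nat.cast_ite, Nat.cast_one,
            Nat.cast_zero]
  have hsum : (k : ℝ≥0∞) ≤ ∑ j : Fin (n+1), μ (E j) := by
    have h1 : (k:ℝ≥0∞) = ∫⁻ _, (k:ℝ≥0∞) ∂μ := by simp
    rw [h1]
    calc ∫⁻ _, (k:ℝ≥0∞) ∂μ
        ≤ ∫⁻ ω, ∑ j : Fin (n+1), (E j).indicator (fun _ => (1:ℝ≥0∞)) ω ∂μ :=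
          lintegral_mono hpt
      _ = ∑ j : Fin (n+1), ∫⁻ ω, (E j).indicator (fun _ => (1:ℝ≥0∞)) ω ∂μ :=
          lintegral_finset_sum _ (fun j _ => measurable_const.indicator (hEmeas j))
      _ = ∑ j : Fin (n+1), μ (E j) := by
          apply Finset.sum_congr rfl
          intro j _
          rw [lintegral_indicator (hEmeas j)]
          simp
  have hsum2 : (k : ℝ≥0∞) ≤ ((n:ℝ≥0∞)+1) * μ (E (Fin.last n)) := by
    calc (k:ℝ≥0∞) ≤ ∑ j : Fin (n+1), μ (E j) := hsum
      _ = ((n:ℝ≥0∞)+1) * μ (E (Fin.last n)) := by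
          rw [Finset.sum_congr rfl (fun j _ => hEdist j), Finset.sum_const, Finset.card_univ,
            Fintype.card_fin, nsmul_eq_mul]
          push_cast
          ring
  have hElast : ENNReal.ofReal (1 - α) ≤ μ (E (Fin.last n)) := by
    have hcancel : ((n:ℝ≥0∞)+1) * ENNReal.ofReal (1 - α)
        ≤ ((n:ℝ≥0∞)+1) * μ (E (Fin.last n)) := by
      refine le_trans ?_ hsum2
      have hnn : ((n:ℝ≥0∞)+1) = ENNReal.ofReal ((n:ℝ)+1) := by
        rw [ENNReal.ofReal_add (by positivity) zero_le_one, ENNReal.ofReal_natCast,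
          ENNReal.ofReal_one]
      rw [hnn, ← ENNReal.ofReal_mul (by positivity)]
      calc ENNReal.ofReal (((n:ℝ)+1) * (1 - α)) ≤ ENNReal.ofReal (k:ℝ) := by
            apply ENNReal.ofReal_le_ofReal
            have hceil := Nat.le_ceil ((1 - α) * ((n:ℝ) + 1))
            rw [hk]
            push_cast
            push_cast at hceil
            linarith
        _ = (k:ℝ≥0∞) := ENNReal.ofReal_natCast k
    exact (ENNReal.mul_le_mul_iff_right (by simp : ((n:ℝ≥0∞)+1) ≠ 0) (by simp)).mp hcancel
  have hincl : E (Fin.last n) ⊆ {ω | R (Fin.last n) ω ≤ βhat ω} := by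
    intro ω hω
    simp only [hE, Set.mem_setOf_eq] at hω
    simp only [Set.mem_setOf_eq, hβhat ω]
    apply sorted_getD_ge hk1 (by rw [List.length_ofFn]; exact hkn)
    rw [countP_ofFn (fun i : Fin n => R i.castSucc ω) (fun b => b < R (Fin.last n) ω)]
    refine lt_of_le_of_lt ?_ hω
    apply Finset.card_le_card_of_injOn (fun i => Fin.castSucc i)
    · intro i hi
      simp only [coe_filter, mem_univ, true_and, Set.mem_setOf_eq] at hi ⊢
      exact hi
    · exact fun a _ b _ h => Fin.castSucc_injective _ h
  exact le_trans hElast (measure_mono hincl)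
end

section
/- Asymmetric split-conformal coverage: Under the setup of nested intervals S_β(x) = [m(x,−β), m(x,β)], define for each calibration pair the one-sided scores R_{i,lo} := inf{β ≥ 0 : m(Xᵢ, −β) ≤ Yᵢ} and R_{i,hi} := inf{β ≥ 0 : m(Xᵢ, β) ≥ Yᵢ}, assumed finite and attained. Let β̂_lo be the ⌈(1−α_lo)(n+1)⌉-th smallest of {R_{i,lo}}ᵢ₌₁ⁿ and β̂_hi the ⌈(1−α_hi)(n+1)⌉-th smallest of {R_{i,hi}}ᵢ₌₁ⁿ. If the pairs (Xᵢ,Yᵢ), i=1,…,n+1, are exchangeable, then P(m(X_{n+1}, −β̂_lo) ≤ Y_{n+1} ≤ m(X_{n+1}, β̂_hi)) ≥ 1 − (α_lo + α_hi). -/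
open MeasureTheory
open scoped ENNReal


open List in
lemma sorted_getD_le_iff {l : List ℝ} (hl : l.Pairwise (· ≤ ·)) {k : ℕ} (hk : k < l.length) (t : ℝ) :
    l.getD k 0 ≤ t ↔ k + 1 ≤ (l.filter (fun x => x ≤ t)).length := by
  have hget : l.getD k 0 = l.get ⟨k, hk⟩ := by
    simp [List.getD_eq_getElem?_getD, List.getElem?_eq_getElem hk]
  constructor
  · intro h
    have hsub : (l.take (k+1)).filter (fun x => x ≤ t) <+ l.filter (fun x => x ≤ t) :=
      (List.take_sublist _ _).filter _
    have hall : ∀ x ∈ l.take (k+1), (fun x => decide (x ≤ t)) x = true := by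
      intro x hx
      rw [List.mem_take_iff_getElem] at hx
      obtain ⟨i, hi, rfl⟩ := hx
      have hi' : i < l.length := lt_of_lt_of_le hi (by simp)
      have : l.get ⟨i, hi'⟩ ≤ l.get ⟨k, hk⟩ := by
        apply hl.rel_get_of_le
        simp only [Fin.mk_le_mk]
        omega
      simp only [decide_eq_true_eq]
      calc l[i] = l.get ⟨i, hi'⟩ := rfl
        _ ≤ l.get ⟨k, hk⟩ := this
        _ ≤ t := hget ▸ h
    have heq : (l.take (k+1)).filter (fun x => x ≤ t) = l.take (k+1) :=
      List.filter_eq_self.mpr hall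
    have := hsub.length_le
    rw [heq, List.length_take] at this
    omega
  · intro h
    by_contra hc
    push_neg at hc
    have hdrop : (l.drop k).filter (fun x => x ≤ t) = [] := by
      apply List.filter_eq_nil_iff.mpr
      intro x hx
      rw [List.mem_iff_getElem] at hx
      obtain ⟨i, hi, rfl⟩ := hx
      have hik : k + i < l.length := by
        rw [List.length_drop] at hi; omega
      have hx' : (l.drop k)[i] = l.get ⟨k + i, hik⟩ := by
        simp [List.getElem_drop]
      have : l.get ⟨k, hk⟩ ≤ l.get ⟨k + i, hik⟩ := by
        apply hl.rel_get_of_le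
        simp only [Fin.mk_le_mk]
        omega
      simp only [decide_eq_true_eq, hx']
      push_neg
      calc t < l.getD k 0 := hc
        _ = l.get ⟨k, hk⟩ := hget
        _ ≤ l.get ⟨k + i, hik⟩ := this
    have : l.filter (fun x => x ≤ t) = (l.take k).filter (fun x => x ≤ t) := by
      conv_lhs => rw [← List.take_append_drop k l]
      rw [List.filter_append, hdrop, List.append_nil]
    have hlen := (List.take_sublist k l).filter (fun x => decide (x ≤ t)) |>.length_le
    rw [this] at h
    have : ((l.take k).filter (fun x => x ≤ t)).length ≤ k := by
      calc ((l.take k).filter (fun x => x ≤ t)).length ≤ (l.take k).length := List.length_filter_le _ _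
        _ ≤ k := by simp
    omega



noncomputable def osm {N : ℕ} (k : ℕ) (v : Fin N → ℝ) : ℝ :=
  ((Multiset.ofList (List.ofFn v)).sort (· ≤ ·)).getD k 0

-- bridging: length of filter of sort = card of multiset filter
lemma length_filter_sort (s : Multiset ℝ) (t : ℝ) :
    ((s.sort (· ≤ ·)).filter (fun x => x ≤ t)).length =
      Multiset.card (s.filter (fun x => x ≤ t)) := by
  conv_rhs => rw [← Multiset.sort_eq s (· ≤ ·)]
  rfl

lemma multiset_getD_le_iff (s : Multiset ℝ) {k : ℕ} (hk : k < Multiset.card s) (t : ℝ) :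
    (s.sort (· ≤ ·)).getD k 0 ≤ t ↔ k + 1 ≤ Multiset.card (s.filter (fun x => x ≤ t)) := by
  rw [← length_filter_sort]
  exact sorted_getD_le_iff (Multiset.pairwise_sort _ _) (by rwa [Multiset.length_sort]) t

lemma os_mono_remove {s u : Multiset ℝ} (h : u ≤ s) {k : ℕ} (hk : k < Multiset.card u) :
    (s.sort (· ≤ ·)).getD k 0 ≤ (u.sort (· ≤ ·)).getD k 0 := by
  have hks : k < Multiset.card s := lt_of_lt_of_le hk (Multiset.card_le_card h)
  rw [multiset_getD_le_iff s hks]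
  have h1 : k + 1 ≤ Multiset.card (u.filter (fun x => x ≤ (u.sort (· ≤ ·)).getD k 0)) :=
    (multiset_getD_le_iff u hk _).mp le_rfl
  exact le_trans h1 (Multiset.card_le_card (Multiset.filter_le_filter _ h))

lemma card_filter_eq {N : ℕ} (v : Fin N → ℝ) (t : ℝ) :
    Multiset.card ((Multiset.ofList (List.ofFn v)).filter (fun x => x ≤ t)) =
      (Finset.univ.filter (fun i => v i ≤ t)).card := by
  rw [← Fin.univ_val_map, Multiset.filter_map, Multiset.card_map, Finset.card_def,
    Finset.filter_val]
  rfl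

lemma os_le_iff {N : ℕ} {k : ℕ} (hk : k < N) (v : Fin N → ℝ) (t : ℝ) :
    osm k v ≤ t ↔ k + 1 ≤ (Finset.univ.filter (fun i => v i ≤ t)).card := by
  rw [osm, multiset_getD_le_iff _ (by simpa using hk), card_filter_eq]

lemma card_le_os {N : ℕ} {k : ℕ} (hk : k < N) (v : Fin N → ℝ) :
    k + 1 ≤ (Finset.univ.filter (fun i => v i ≤ osm k v)).card :=
  (os_le_iff hk v _).mp le_rfl

lemma os_perm {N : ℕ} (k : ℕ) (v : Fin N → ℝ) (σ : Equiv.Perm (Fin N)) :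
    osm k (fun i => v (σ i)) = osm k v := by
  unfold osm
  congr 2
  rw [← Fin.univ_val_map, ← Fin.univ_val_map]
  have : (fun i => v (σ i)) = v ∘ σ := rfl
  rw [this, ← Multiset.map_map, Multiset.map_univ_val_equiv]

lemma measurable_os {N : ℕ} {k : ℕ} (hk : k < N) :
    Measurable (osm k : (Fin N → ℝ) → ℝ) := by
  apply measurable_of_Iic
  intro t
  have : (osm k : (Fin N → ℝ) → ℝ) ⁻¹' Set.Iic t =
      ⋃ (s : Finset (Fin N)) (_ : s.card = k + 1), ⋂ i ∈ s, {v : Fin N → ℝ | v i ≤ t} := by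
    ext v
    simp only [Set.mem_preimage, Set.mem_Iic, Set.mem_iUnion, Set.mem_iInter, Set.mem_setOf_eq]
    rw [os_le_iff hk]
    constructor
    · intro h
      obtain ⟨s, hs, hcard⟩ := Finset.exists_subset_card_eq h
      exact ⟨s, hcard, fun i hi => (Finset.mem_filter.mp (hs hi)).2⟩
    · rintro ⟨s, hcard, hall⟩
      calc k + 1 = s.card := hcard.symm
        _ ≤ _ := Finset.card_le_card (fun i hi => Finset.mem_filter.mpr ⟨Finset.mem_univ i, hall i hi⟩)
  rw [this]
  exact MeasurableSet.iUnion fun s => MeasurableSet.iUnion fun _ =>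
    MeasurableSet.biInter s.countable_toSet fun i _ =>
      measurableSet_le (measurable_pi_apply i) measurable_const


lemma measurable_sInf_score {𝒳 : Type*} [MeasurableSpace 𝒳] (φ : 𝒳 → ℝ → Prop)
    (hφmeas : ∀ q : ℚ, MeasurableSet {p : 𝒳 | φ p (q : ℝ)})
    (hup : ∀ p (β β' : ℝ), 0 ≤ β → β ≤ β' → φ p β → φ p β') :
    Measurable (fun p => sInf {β : ℝ | 0 ≤ β ∧ φ p β}) := by
  apply measurable_of_Iio
  intro t
  set G := fun p => sInf {β : ℝ | 0 ≤ β ∧ φ p β} with hG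
  have key : G ⁻¹' Set.Iio t =
      (⋃ q : ℚ, ({p : 𝒳 | φ p (q : ℝ)} ∩ {_p : 𝒳 | 0 ≤ (q : ℝ) ∧ (q : ℝ) < t})) ∪
      ((⋂ q : ℚ, ({p : 𝒳 | φ p (q : ℝ)} ∩ {_p : 𝒳 | 0 ≤ (q : ℝ)})ᶜ) ∩ {_p : 𝒳 | (0:ℝ) < t}) := by
    ext p
    simp only [Set.mem_preimage, Set.mem_Iio, Set.mem_union, Set.mem_iUnion, Set.mem_iInter,
      Set.mem_inter_iff, Set.mem_setOf_eq, Set.mem_compl_iff, not_and]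
    constructor
    · intro h
      rcases Set.eq_empty_or_nonempty {β : ℝ | 0 ≤ β ∧ φ p β} with he | hne
      · right
        refine ⟨fun q hq hq0 => ?_, ?_⟩
        · have : (q : ℝ) ∈ {β : ℝ | 0 ≤ β ∧ φ p β} := ⟨hq0, hq⟩
          rw [he] at this; exact this
        · have : G p = 0 := by rw [hG]; simp [he, Real.sInf_empty]
          rwa [this] at h
      · left
        have hbdd : BddBelow {β : ℝ | 0 ≤ β ∧ φ p β} := ⟨0, fun x hx => hx.1⟩
        obtain ⟨β, hβ, hβt⟩ := (csInf_lt_iff hbdd hne).mp h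
        obtain ⟨q, hq1, hq2⟩ := exists_rat_btwn hβt
        exact ⟨q, hup p β q hβ.1 hq1.le hβ.2, le_trans hβ.1 hq1.le, hq2⟩
    · rintro (⟨q, hφq, hq0, hqt⟩ | ⟨hnone, h0t⟩)
      · have hbdd : BddBelow {β : ℝ | 0 ≤ β ∧ φ p β} := ⟨0, fun x hx => hx.1⟩
        exact lt_of_le_of_lt (csInf_le hbdd ⟨hq0, hφq⟩) hqt
      · have he : {β : ℝ | 0 ≤ β ∧ φ p β} = ∅ := by
          by_contra hne
          obtain ⟨β, hβ0, hβφ⟩ := Set.nonempty_iff_ne_empty.mpr hne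
          obtain ⟨q, hq1, hq2⟩ := exists_rat_btwn (lt_add_one β)
          exact hnone q (hup p β q hβ0 hq1.le hβφ) (le_trans hβ0 hq1.le)
        have : G p = 0 := by rw [hG]; simp [he, Real.sInf_empty]
        rwa [this]
  rw [key]
  apply MeasurableSet.union
  · exact MeasurableSet.iUnion fun q => (hφmeas q).inter (MeasurableSet.const _)
  · exact (MeasurableSet.iInter fun q =>
      ((hφmeas q).inter (MeasurableSet.const _)).compl).inter (MeasurableSet.const _)

lemma one_sided
    {Ω 𝒳' : Type*} [MeasurableSpace Ω] [MeasurableSpace 𝒳']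
    (μ : Measure Ω) [IsProbabilityMeasure μ]
    (n : ℕ) (Z : Fin (n+1) → Ω → 𝒳') (hZmeas : ∀ i, Measurable (Z i))
    (hexch : ∀ σ : Equiv.Perm (Fin (n + 1)),
      Measure.map (fun ω => fun i => Z (σ i) ω) μ = Measure.map (fun ω => fun i => Z i ω) μ)
    (g : 𝒳' → ℝ) (hg : Measurable g)
    (k : ℕ) (hk1 : 1 ≤ k) (hkn : k ≤ n) :
    ENNReal.ofReal ((k : ℝ) / (n+1)) ≤
      μ {ω | g (Z (Fin.last n) ω) ≤ osm (k-1) (fun i : Fin n => g (Z i.castSucc ω))} := by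
  classical
  have hk1n : k - 1 < n + 1 := by omega
  have hk1n' : k - 1 < n := by omega
  set W : Ω → (Fin (n+1) → 𝒳') := fun ω i => Z i ω with hW
  have hWmeas : Measurable W := measurable_pi_lambda _ hZmeas
  set Q : (Fin (n+1) → 𝒳') → ℝ := fun v => osm (k-1) (fun j => g (v j)) with hQ
  have hQmeas : Measurable Q := by
    apply (measurable_os hk1n).comp
    exact measurable_pi_lambda _ fun j => hg.comp (measurable_pi_apply j)
  set S : Fin (n+1) → Set (Fin (n+1) → 𝒳') := fun i => {v | g (v i) ≤ Q v} with hS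
  have hSmeas : ∀ i, MeasurableSet (S i) :=
    fun i => measurableSet_le (hg.comp (measurable_pi_apply i)) hQmeas
  -- step 1: equal probabilities by exchangeability
  have hstep1 : ∀ i, μ (W ⁻¹' S i) = μ (W ⁻¹' S (Fin.last n)) := by
    intro i
    set σ := Equiv.swap i (Fin.last n) with hσ
    set P : (Fin (n+1) → 𝒳') → (Fin (n+1) → 𝒳') := fun v j => v (σ j) with hP
    have hperm : Measurable P := measurable_pi_lambda _ fun j => measurable_pi_apply _
    have hcomp : (fun ω => fun j => Z (σ j) ω) = P ∘ W := rfl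
    have hpre : P ⁻¹' S i = S (Fin.last n) := by
      ext v
      show g ((P v) i) ≤ osm (k-1) (fun j => g ((P v) j)) ↔
        g (v (Fin.last n)) ≤ osm (k-1) (fun j => g (v j))
      have h2 : osm (k-1) (fun j => g ((P v) j)) = osm (k-1) (fun j => g (v j)) :=
        os_perm (k-1) (fun j => g (v j)) σ
      rw [h2]
      have h1 : (P v) i = v (Fin.last n) := by
        show v (σ i) = v (Fin.last n)
        rw [hσ, Equiv.swap_apply_left]
      rw [h1]
    calc μ (W ⁻¹' S i) = Measure.map W μ (S i) := (Measure.map_apply hWmeas (hSmeas i)).symm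
      _ = Measure.map (fun ω => fun j => Z (σ j) ω) μ (S i) := by rw [hexch σ]
      _ = Measure.map (P ∘ W) μ (S i) := by rw [hcomp]
      _ = Measure.map P (Measure.map W μ) (S i) := by rw [Measure.map_map hperm hWmeas]
      _ = Measure.map W μ (P ⁻¹' S i) := Measure.map_apply hperm (hSmeas i)
      _ = μ (W ⁻¹' S (Fin.last n)) := by
          rw [hpre, Measure.map_apply hWmeas (hSmeas (Fin.last n))]
  -- step 2: pointwise count
  have hcount : ∀ ω, (k : ℝ≥0∞) ≤ ∑ i : Fin (n+1), (W ⁻¹' S i).indicator (1 : Ω → ℝ≥0∞) ω := by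
    intro ω
    have hcard := card_le_os hk1n (fun j : Fin (n+1) => g (Z j ω))
    rw [Nat.sub_add_cancel hk1] at hcard
    have heq : ∑ i : Fin (n+1), (W ⁻¹' S i).indicator (1 : Ω → ℝ≥0∞) ω =
        ((Finset.univ.filter (fun i : Fin (n+1) =>
          g (Z i ω) ≤ osm (k-1) (fun j : Fin (n+1) => g (Z j ω)))).card : ℝ≥0∞) := by
      rw [Finset.card_filter, Nat.cast_sum]
      apply Finset.sum_congr rfl
      intro i _
      rw [Set.indicator_apply]
      by_cases h : ω ∈ W ⁻¹' S i
      · have h' : g (Z i ω) ≤ osm (k-1) fun j : Fin (n+1) => g (Z j ω) := h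
        simp [h, h']
      · have h' : ¬ (g (Z i ω) ≤ osm (k-1) fun j : Fin (n+1) => g (Z j ω)) := h
        simp [h, h']
    rw [heq]
    exact_mod_cast hcard
  -- step 3: k ≤ sum of measures
  have hsum : (k : ℝ≥0∞) ≤ ∑ i : Fin (n+1), μ (W ⁻¹' S i) := by
    have h1 : (k : ℝ≥0∞) = ∫⁻ _, (k : ℝ≥0∞) ∂μ := by simp
    rw [h1]
    have h2 : ∀ i : Fin (n+1), ∫⁻ ω, (W ⁻¹' S i).indicator (1 : Ω → ℝ≥0∞) ω ∂μ =
        μ (W ⁻¹' S i) := fun i => lintegral_indicator_one (hWmeas (hSmeas i))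
    calc ∫⁻ _, (k : ℝ≥0∞) ∂μ
        ≤ ∫⁻ ω, ∑ i : Fin (n+1), (W ⁻¹' S i).indicator (1 : Ω → ℝ≥0∞) ω ∂μ :=
          lintegral_mono hcount
      _ = ∑ i : Fin (n+1), ∫⁻ ω, (W ⁻¹' S i).indicator (1 : Ω → ℝ≥0∞) ω ∂μ :=
          lintegral_finset_sum _ fun i _ =>
            (measurable_one.indicator (hWmeas (hSmeas i)))
      _ = ∑ i : Fin (n+1), μ (W ⁻¹' S i) := by simp_rw [h2]
  -- step 4
  have hsum2 : (k : ℝ≥0∞) ≤ (n+1 : ℝ≥0∞) * μ (W ⁻¹' S (Fin.last n)) := by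
    calc (k : ℝ≥0∞) ≤ ∑ i : Fin (n+1), μ (W ⁻¹' S i) := hsum
      _ = ∑ _i : Fin (n+1), μ (W ⁻¹' S (Fin.last n)) := Finset.sum_congr rfl fun i _ => hstep1 i
      _ = (n+1 : ℝ≥0∞) * μ (W ⁻¹' S (Fin.last n)) := by
          rw [Finset.sum_const, Finset.card_univ, Fintype.card_fin, nsmul_eq_mul]
          norm_cast
  -- step 5: subset of target
  have hsub : W ⁻¹' S (Fin.last n) ⊆
      {ω | g (Z (Fin.last n) ω) ≤ osm (k-1) (fun i : Fin n => g (Z i.castSucc ω))} := by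
    intro ω hω
    have h1 : g (Z (Fin.last n) ω) ≤ osm (k-1) (fun j : Fin (n+1) => g (Z j ω)) := hω
    refine le_trans h1 ?_
    unfold osm
    apply os_mono_remove
    · -- submultiset
      have : List.ofFn (fun j : Fin (n+1) => g (Z j ω)) =
          (List.ofFn (fun i : Fin n => g (Z i.castSucc ω))).concat (g (Z (Fin.last n) ω)) :=
        List.ofFn_succ' _
      rw [this, List.concat_eq_append]
      have : Multiset.ofList ((List.ofFn (fun i : Fin n => g (Z i.castSucc ω))) ++
          [g (Z (Fin.last n) ω)]) =
          Multiset.ofList (List.ofFn (fun i : Fin n => g (Z i.castSucc ω))) +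
          Multiset.ofList [g (Z (Fin.last n) ω)] := rfl
      rw [this]
      exact Multiset.le_add_right _ _
    · simpa using hk1n'
  -- conclude
  have hfinal : ENNReal.ofReal ((k : ℝ) / (n+1)) ≤ μ (W ⁻¹' S (Fin.last n)) := by
    have hne : ((n:ℝ≥0∞)+1) ≠ 0 := by simp
    have hnt : ((n:ℝ≥0∞)+1) ≠ ⊤ := by
      simp [ENNReal.add_ne_top]
    rw [ENNReal.ofReal_div_of_pos (by positivity)]
    rw [ENNReal.ofReal_natCast]
    have : ENNReal.ofReal ((n:ℝ)+1) = (n : ℝ≥0∞) + 1 := by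
      rw [ENNReal.ofReal_add (by positivity) (by norm_num)]
      simp [ENNReal.ofReal_natCast]
    rw [this]
    rw [ENNReal.div_le_iff_le_mul (Or.inl hne) (Or.inl hnt)]
    rw [mul_comm]
    exact hsum2
  exact le_trans hfinal (measure_mono hsub)

/-- asymmetric split-conformal coverage. With one-sided scores
`R_{i,lo} = inf{β ≥ 0 : m(Xᵢ,-β) ≤ Yᵢ}` and `R_{i,hi} = inf{β ≥ 0 : m(Xᵢ,β) ≥ Yᵢ}`
(finite and attained), and `β̂_lo`, `β̂_hi` the respective
`⌈(1-α_lo)(n+1)⌉`-th and `⌈(1-α_hi)(n+1)⌉`-th calibration order statistics,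
exchangeability yields coverage at least `1 - (α_lo + α_hi)`. -/
theorem asymmetric_split_conformal_coverage
    {Ω 𝒳 : Type*} [MeasurableSpace Ω] [MeasurableSpace 𝒳]
    (μ : Measure Ω) [IsProbabilityMeasure μ]
    (n : ℕ) (hn : 1 ≤ n)
    (Z : Fin (n + 1) → Ω → 𝒳 × ℝ)
    (hZmeas : ∀ i, Measurable (Z i))
    (hexch : ∀ σ : Equiv.Perm (Fin (n + 1)),
      Measure.map (fun ω => fun i => Z (σ i) ω) μ =
        Measure.map (fun ω => fun i => Z i ω) μ)
    (m : 𝒳 → ℝ → ℝ) (hm : Measurable fun p : 𝒳 × ℝ => m p.1 p.2)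
    (h_lo_mono : ∀ x, AntitoneOn (fun β => m x (-β)) (Set.Ici (0 : ℝ)))
    (h_hi_mono : ∀ x, MonotoneOn (fun β => m x β) (Set.Ici (0 : ℝ)))
    (Rlo Rhi : Fin (n + 1) → Ω → ℝ)
    (hRlo : ∀ i ω, Rlo i ω = sInf {β : ℝ | 0 ≤ β ∧ m (Z i ω).1 (-β) ≤ (Z i ω).2})
    (hRhi : ∀ i ω, Rhi i ω = sInf {β : ℝ | 0 ≤ β ∧ (Z i ω).2 ≤ m (Z i ω).1 β})
    (hlo_fin : ∀ i, ∀ᵐ ω ∂μ, ({β : ℝ | 0 ≤ β ∧ m (Z i ω).1 (-β) ≤ (Z i ω).2}).Nonempty)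
    (hhi_fin : ∀ i, ∀ᵐ ω ∂μ, ({β : ℝ | 0 ≤ β ∧ (Z i ω).2 ≤ m (Z i ω).1 β}).Nonempty)
    (hlo_attain : ∀ i, ∀ᵐ ω ∂μ, m (Z i ω).1 (-(Rlo i ω)) ≤ (Z i ω).2)
    (hhi_attain : ∀ i, ∀ᵐ ω ∂μ, (Z i ω).2 ≤ m (Z i ω).1 (Rhi i ω))
    (αlo αhi : ℝ) (hαlo : 0 < αlo) (hαlo₁ : αlo < 1) (hαhi : 0 < αhi) (hαhi₁ : αhi < 1)
    (klo khi : ℕ)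
    (hklo : klo = ⌈(1 - αlo) * (n + 1 : ℝ)⌉₊) (hklon : klo ≤ n)
    (hkhi : khi = ⌈(1 - αhi) * (n + 1 : ℝ)⌉₊) (hkhin : khi ≤ n)
    (βlo βhi : Ω → ℝ)
    (hβlo : ∀ ω, βlo ω =
      ((Multiset.ofList (List.ofFn fun i : Fin n => Rlo i.castSucc ω)).sort (· ≤ ·)).getD
        (klo - 1) 0)
    (hβhi : ∀ ω, βhi ω =
      ((Multiset.ofList (List.ofFn fun i : Fin n => Rhi i.castSucc ω)).sort (· ≤ ·)).getD
        (khi - 1) 0) :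
    ENNReal.ofReal (1 - (αlo + αhi)) ≤
      μ {ω | m (Z (Fin.last n) ω).1 (-(βlo ω)) ≤ (Z (Fin.last n) ω).2 ∧
             (Z (Fin.last n) ω).2 ≤ m (Z (Fin.last n) ω).1 (βhi ω)} := by
  classical
  by_cases hneg : 1 - (αlo + αhi) ≤ 0
  · rw [ENNReal.ofReal_eq_zero.mpr hneg]
    exact zero_le
  push_neg at hneg
  set glo : 𝒳 × ℝ → ℝ := fun p => sInf {β : ℝ | 0 ≤ β ∧ m p.1 (-β) ≤ p.2} with hglo
  set ghi : 𝒳 × ℝ → ℝ := fun p => sInf {β : ℝ | 0 ≤ β ∧ p.2 ≤ m p.1 β} with hghi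
  have hglom : Measurable glo := by
    rw [hglo]
    apply measurable_sInf_score (φ := fun (p : 𝒳 × ℝ) (β : ℝ) => m p.1 (-β) ≤ p.2)
    · intro q
      exact measurableSet_le
        (hm.comp ((measurable_fst.prodMk measurable_const) :
          Measurable fun p : 𝒳 × ℝ => (p.1, -(q:ℝ)))) measurable_snd
    · intro p β β' hβ0 hββ' h
      exact le_trans (h_lo_mono p.1 (Set.mem_Ici.mpr hβ0)
        (Set.mem_Ici.mpr (hβ0.trans hββ')) hββ') h
  have hghim : Measurable ghi := by
    rw [hghi]
    apply measurable_sInf_score (φ := fun (p : 𝒳 × ℝ) (β : ℝ) => p.2 ≤ m p.1 β)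
    · intro q
      exact measurableSet_le measurable_snd
        (hm.comp ((measurable_fst.prodMk measurable_const) :
          Measurable fun p : 𝒳 × ℝ => (p.1, (q:ℝ))))
    · intro p β β' hβ0 hββ' h
      exact le_trans h (h_hi_mono p.1 (Set.mem_Ici.mpr hβ0)
        (Set.mem_Ici.mpr (hβ0.trans hββ')) hββ')
  have hRlog : ∀ i ω, Rlo i ω = glo (Z i ω) := fun i ω => hRlo i ω
  have hRhig : ∀ i ω, Rhi i ω = ghi (Z i ω) := fun i ω => hRhi i ω
  have hglo0 : ∀ p, 0 ≤ glo p := fun p => Real.sInf_nonneg fun x hx => hx.1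
  have hghi0 : ∀ p, 0 ≤ ghi p := fun p => Real.sInf_nonneg fun x hx => hx.1
  have hklo1 : 1 ≤ klo := by
    rw [hklo]
    exact Nat.one_le_iff_ne_zero.mpr (Nat.ceil_pos.mpr
      (mul_pos (by linarith) (by positivity))).ne'
  have hkhi1 : 1 ≤ khi := by
    rw [hkhi]
    exact Nat.one_le_iff_ne_zero.mpr (Nat.ceil_pos.mpr
      (mul_pos (by linarith) (by positivity))).ne'
  have hklon' : klo - 1 < n := by omega
  have hkhin' : khi - 1 < n := by omega
  -- rewrite βlo, βhi as order statistics of scores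
  have hβlo_os : ∀ ω, βlo ω = osm (klo-1) (fun i : Fin n => glo (Z i.castSucc ω)) := by
    intro ω
    rw [hβlo ω]
    have h : (fun i : Fin n => Rlo i.castSucc ω) = fun i => glo (Z i.castSucc ω) :=
      funext fun i => hRlog _ _
    rw [h]
    rfl
  have hβhi_os : ∀ ω, βhi ω = osm (khi-1) (fun i : Fin n => ghi (Z i.castSucc ω)) := by
    intro ω
    rw [hβhi ω]
    have h : (fun i : Fin n => Rhi i.castSucc ω) = fun i => ghi (Z i.castSucc ω) :=
      funext fun i => hRhig _ _
    rw [h]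
    rfl
  set Alo : Set Ω :=
    {ω | glo (Z (Fin.last n) ω) ≤ osm (klo-1) (fun i : Fin n => glo (Z i.castSucc ω))} with hAlo
  set Ahi : Set Ω :=
    {ω | ghi (Z (Fin.last n) ω) ≤ osm (khi-1) (fun i : Fin n => ghi (Z i.castSucc ω))} with hAhi
  have hAlo_bound : ENNReal.ofReal ((klo : ℝ) / (n+1)) ≤ μ Alo :=
    one_sided μ n Z hZmeas hexch glo hglom klo hklo1 hklon
  have hAhi_bound : ENNReal.ofReal ((khi : ℝ) / (n+1)) ≤ μ Ahi :=
    one_sided μ n Z hZmeas hexch ghi hghim khi hkhi1 hkhin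
  have hAhi_meas : MeasurableSet Ahi :=
    measurableSet_le (hghim.comp (hZmeas _))
      ((measurable_os hkhin').comp
        (measurable_pi_lambda _ fun i => hghim.comp (hZmeas i.castSucc)))
  -- coverage bounds
  have hdivlo : (1 - αlo : ℝ) ≤ (klo : ℝ) / (n+1) := by
    rw [le_div_iff₀ (by positivity)]
    rw [hklo]
    exact Nat.le_ceil _
  have hdivhi : (1 - αhi : ℝ) ≤ (khi : ℝ) / (n+1) := by
    rw [le_div_iff₀ (by positivity)]
    rw [hkhi]
    exact Nat.le_ceil _
  have hlo_cov : ENNReal.ofReal (1 - αlo) ≤ μ Alo :=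
    le_trans (ENNReal.ofReal_le_ofReal hdivlo) hAlo_bound
  have hhi_cov : ENNReal.ofReal (1 - αhi) ≤ μ Ahi :=
    le_trans (ENNReal.ofReal_le_ofReal hdivhi) hAhi_bound
  -- a.e. inclusion into the target event
  have hae : ∀ᵐ ω ∂μ, ω ∈ Alo ∩ Ahi →
      ω ∈ {ω | m (Z (Fin.last n) ω).1 (-(βlo ω)) ≤ (Z (Fin.last n) ω).2 ∧
             (Z (Fin.last n) ω).2 ≤ m (Z (Fin.last n) ω).1 (βhi ω)} := by
    filter_upwards [hlo_attain (Fin.last n), hhi_attain (Fin.last n)] with ω h1 h2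
    rintro ⟨hA, hB⟩
    have hA' : glo (Z (Fin.last n) ω) ≤ osm (klo-1) (fun i : Fin n => glo (Z i.castSucc ω)) := hA
    have hB' : ghi (Z (Fin.last n) ω) ≤ osm (khi-1) (fun i : Fin n => ghi (Z i.castSucc ω)) := hB
    have h0lo : 0 ≤ Rlo (Fin.last n) ω := (hRlog _ ω) ▸ hglo0 (Z (Fin.last n) ω)
    have h0hi : 0 ≤ Rhi (Fin.last n) ω := (hRhig _ ω) ▸ hghi0 (Z (Fin.last n) ω)
    have hlelo : Rlo (Fin.last n) ω ≤ βlo ω := by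
      rw [hRlog, hβlo_os ω]; exact hA'
    have hlehi : Rhi (Fin.last n) ω ≤ βhi ω := by
      rw [hRhig, hβhi_os ω]; exact hB'
    constructor
    · exact le_trans (h_lo_mono (Z (Fin.last n) ω).1 (Set.mem_Ici.mpr h0lo)
        (Set.mem_Ici.mpr (h0lo.trans hlelo)) hlelo) h1
    · exact le_trans h2 (h_hi_mono (Z (Fin.last n) ω).1 (Set.mem_Ici.mpr h0hi)
        (Set.mem_Ici.mpr (h0hi.trans hlehi)) hlehi)
  have hsub : μ (Alo ∩ Ahi) ≤
      μ {ω | m (Z (Fin.last n) ω).1 (-(βlo ω)) ≤ (Z (Fin.last n) ω).2 ∧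
             (Z (Fin.last n) ω).2 ≤ m (Z (Fin.last n) ω).1 (βhi ω)} :=
    measure_mono_ae hae
  -- union bound
  have hunion : μ Alo + μ Ahi ≤ 1 + μ (Alo ∩ Ahi) := by
    rw [← measure_union_add_inter Alo hAhi_meas]
    exact add_le_add_left prob_le_one _
  have key : ENNReal.ofReal (1 - (αlo + αhi)) + 1 ≤ μ (Alo ∩ Ahi) + 1 := by
    calc ENNReal.ofReal (1 - (αlo + αhi)) + 1
        = ENNReal.ofReal (1 - αlo) + ENNReal.ofReal (1 - αhi) := by
          rw [← ENNReal.ofReal_one, ← ENNReal.ofReal_add (by linarith) (by norm_num),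
            ← ENNReal.ofReal_add (by linarith) (by linarith)]
          congr 1
          ring
      _ ≤ μ Alo + μ Ahi := add_le_add hlo_cov hhi_cov
      _ ≤ 1 + μ (Alo ∩ Ahi) := hunion
      _ = μ (Alo ∩ Ahi) + 1 := add_comm _ _
  exact le_trans ((ENNReal.add_le_add_iff_right ENNReal.one_ne_top).mp key) hsub
end

section
/- If R₁, …, R_{n+1} are exchangeable real random variables and k ∈ {1, …, n}, and R^{(k)} denotes the k-th smallest among R₁, …, R_n, then P(R_{n+1} ≤ R^{(k)}) ≥ k/(n+1), with equality when the Rᵢ are almost surely distinct; in general P(R_{n+1} > R^{(k)}) ≤ (n+1−k)/(n+1) when ties are broken so that at most n+1−k of the variables exceed R^{(k)}. -/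
open MeasureTheory Finset
open scoped ENNReal NNReal



lemma sorted_countP_lt : ∀ {l : List ℝ}, l.Pairwise (· ≤ ·) →
    ∀ p (hp : p < l.length), l.countP (fun a => decide (a < l[p])) ≤ p := by
  intro l
  induction l with
  | nil => intro _ p hp; simp at hp
  | cons a l ih =>
    rw [List.pairwise_cons]
    rintro ⟨ha, hs⟩ p hp
    rcases p with _ | q
    · simp only [List.getElem_cons_zero, List.countP_cons]
      have h0 : l.countP (fun b => decide (b < a)) = 0 := by
        rw [List.countP_eq_zero]
        intro b hb
        simpa using not_lt.2 (ha b hb)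
      simp [h0]
    · have hq : q < l.length := by simpa using Nat.lt_of_succ_lt_succ hp
      simp only [List.getElem_cons_succ, List.countP_cons]
      have := ih hs q hq
      split <;> omega

lemma sorted_countP_le : ∀ {l : List ℝ}, l.Pairwise (· ≤ ·) →
    ∀ p (hp : p < l.length), p + 1 ≤ l.countP (fun a => decide (a ≤ l[p])) := by
  intro l
  induction l with
  | nil => intro _ p hp; simp at hp
  | cons a l ih =>
    rw [List.pairwise_cons]
    rintro ⟨ha, hs⟩ p hp
    rcases p with _ | q
    · simp only [List.getElem_cons_zero, List.countP_cons]
      simp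
    · have hq : q < l.length := by simpa using Nat.lt_of_succ_lt_succ hp
      simp only [List.getElem_cons_succ, List.countP_cons]
      have h1 := ih hs q hq
      have h2 : a ≤ l[q] := ha _ (List.getElem_mem _)
      rw [if_pos (by exact decide_eq_true h2)]
      omega

lemma le_sorted_getD_iff {s : Multiset ℝ} {p : ℕ} (hp : p < Multiset.card s) (x : ℝ) :
    x ≤ (s.sort (· ≤ ·)).getD p 0 ↔ Multiset.countP (fun a => a < x) s ≤ p := by
  set l := s.sort (· ≤ ·) with hl
  have hlen : l.length = Multiset.card s := Multiset.length_sort _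
  have hp' : p < l.length := by rw [hlen]; exact hp
  have hsorted : l.Pairwise (· ≤ ·) := Multiset.pairwise_sort _ _
  have hgetD : l.getD p 0 = l[p] := List.getD_eq_getElem l 0 hp'
  have hcount : ∀ (q : ℝ → Prop) [DecidablePred q],
      Multiset.countP q s = l.countP (fun a => decide (q a)) := by
    intro q _
    conv_lhs => rw [← Multiset.sort_eq s (· ≤ ·)]
    exact Multiset.coe_countP _ _
  rw [hgetD, hcount]
  constructor
  · intro hx
    calc l.countP (fun a => decide (a < x)) ≤ l.countP (fun a => decide (a < l[p])) := by
          apply List.countP_mono_left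
          intro a _ ha
          simp only [decide_eq_true_eq] at ha ⊢; linarith
        _ ≤ p := sorted_countP_lt hsorted p hp'
  · intro hc
    by_contra hx
    push_neg at hx
    have : (p + 1 : ℕ) ≤ l.countP (fun a => decide (a < x)) := by
      calc (p+1 : ℕ) ≤ l.countP (fun a => decide (a ≤ l[p])) := sorted_countP_le hsorted p hp'
        _ ≤ l.countP (fun a => decide (a < x)) := by
            apply List.countP_mono_left
            intro a _ ha
            simp only [decide_eq_true_eq] at ha ⊢; linarith
    omega
lemma card_lt_filter {m k : ℕ} (hk : k ≤ m) :
    (univ.filter fun r : Fin m => (r:ℕ) < k).card = k := by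
  have : (univ.filter fun r : Fin m => (r:ℕ) < k)
      = (univ : Finset (Fin k)).map (Fin.castLEEmb hk) := by
    ext r
    simp only [mem_filter, mem_univ, true_and, mem_map, Fin.castLEEmb_apply]
    constructor
    · intro h; exact ⟨⟨r, h⟩, by simp⟩
    · rintro ⟨b, -, rfl⟩; exact b.2
  rw [this, Finset.card_map, Finset.card_univ, Fintype.card_fin]

lemma countP_le_sorted_getD {s : Multiset ℝ} {p : ℕ} (hp : p < Multiset.card s) :
    p + 1 ≤ Multiset.countP (fun a => a ≤ (s.sort (· ≤ ·)).getD p 0) s := by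
  set l := s.sort (· ≤ ·) with hl
  have hp' : p < l.length := by rw [Multiset.length_sort]; exact hp
  have hgetD : l.getD p 0 = l[p] := List.getD_eq_getElem l 0 hp'
  have hcount : Multiset.countP (fun a => a ≤ l.getD p 0) s
      = l.countP (fun a => decide (a ≤ l.getD p 0)) := by
    conv_lhs => rw [← Multiset.sort_eq s (· ≤ ·)]
    exact Multiset.coe_countP _ _
  rw [hcount, hgetD]
  exact sorted_countP_le (Multiset.pairwise_sort _ _) p hp'

lemma cnt_eq_countP {m : ℕ} (x : Fin m → ℝ) (y : ℝ) :
    (univ.filter fun i : Fin m => x i < y).card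
      = Multiset.countP (fun a => a < y) (Multiset.map x Finset.univ.val) := by
  rw [Multiset.countP_map, Finset.card_def, Finset.filter_val]

lemma cnt_le_countP {m : ℕ} (x : Fin m → ℝ) (y : ℝ) :
    (univ.filter fun i : Fin m => x i ≤ y).card
      = Multiset.countP (fun a => a ≤ y) (Multiset.map x Finset.univ.val) := by
  rw [Multiset.countP_map, Finset.card_def, Finset.filter_val]

lemma card_low {m k : ℕ} (hk1 : 1 ≤ k) (hk : k ≤ m) (x : Fin m → ℝ) :
    k ≤ (univ.filter fun j : Fin m =>
        (univ.filter fun i : Fin m => x i < x j).card ≤ k - 1).card := by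
  set s : Multiset ℝ := Multiset.map x Finset.univ.val with hs
  have hcard : Multiset.card s = m := by simp [hs]
  have hp : k - 1 < Multiset.card s := by omega
  set t := (s.sort (· ≤ ·)).getD (k-1) 0 with ht
  have hsub : (univ.filter fun j : Fin m => x j ≤ t)
      ⊆ (univ.filter fun j : Fin m => (univ.filter fun i : Fin m => x i < x j).card ≤ k-1) := by
    intro j hj
    simp only [mem_filter, mem_univ, true_and] at hj ⊢
    rw [cnt_eq_countP, ← hs]
    exact (le_sorted_getD_iff hp (x j)).1 hj
  refine le_trans ?_ (Finset.card_le_card hsub)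
  rw [cnt_le_countP, ← hs]
  have h2 := countP_le_sorted_getD hp
  rw [← ht] at h2
  omega

lemma card_exact {m k : ℕ} (hk1 : 1 ≤ k) (hk : k ≤ m) (x : Fin m → ℝ)
    (hx : Function.Injective x) :
    (univ.filter fun j : Fin m =>
        (univ.filter fun i : Fin m => x i < x j).card ≤ k - 1).card = k := by
  have hlt : ∀ j, (univ.filter fun i : Fin m => x i < x j).card < m := by
    intro j
    have hss : (univ.filter fun i : Fin m => x i < x j) ⊆ univ.erase j := by
      intro i hi; simp only [mem_filter, mem_univ, true_and] at hi
      refine Finset.mem_erase.2 ⟨?_, Finset.mem_univ _⟩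
      rintro rfl; exact lt_irrefl _ hi
    calc (univ.filter fun i : Fin m => x i < x j).card
        ≤ (univ.erase j).card := Finset.card_le_card hss
      _ < m := by
          rw [Finset.card_erase_of_mem (mem_univ j), Finset.card_univ, Fintype.card_fin]
          omega
  set g : Fin m → Fin m := fun j => ⟨(univ.filter fun i : Fin m => x i < x j).card, hlt j⟩
    with hg
  have key : ∀ a b : Fin m, x a < x b →
      (univ.filter fun l : Fin m => x l < x a).card
        < (univ.filter fun l : Fin m => x l < x b).card := by
    intro a b hab
    apply Finset.card_lt_card
    rw [Finset.ssubset_iff_of_subset]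
    · exact ⟨a, Finset.mem_filter.2 ⟨mem_univ a, hab⟩, by
        simp only [mem_filter, mem_univ, true_and, not_lt]; exact le_refl _⟩
    · intro l hl; simp only [mem_filter, mem_univ, true_and] at hl ⊢; linarith
  have hginj : Function.Injective g := by
    intro i j hij
    have hc : (univ.filter fun l : Fin m => x l < x i).card
        = (univ.filter fun l : Fin m => x l < x j).card := by
      simpa [hg, Fin.ext_iff] using hij
    by_contra hne
    have hxne : x i ≠ x j := fun h => hne (hx h)
    rcases lt_or_gt_of_ne hxne with h | h
    · exact absurd hc (Nat.ne_of_lt (key _ _ h))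
    · exact absurd hc.symm (Nat.ne_of_lt (key _ _ h))
  have hgbij : Function.Bijective g := Finite.injective_iff_bijective.1 hginj
  have hcards : (univ.filter fun j : Fin m => ((g j : ℕ)) ≤ k - 1).card
      = (univ.filter fun r : Fin m => (r : ℕ) ≤ k - 1).card := by
    apply Finset.card_nbij' g (Function.surjInv hgbij.2)
    · intro a ha; simp only [mem_coe, mem_filter, mem_univ, true_and] at ha ⊢; exact ha
    · intro b hb; simp only [mem_coe, mem_filter, mem_univ, true_and] at hb ⊢
      show ((g (Function.surjInv hgbij.2 b) : Fin m) : ℕ) ≤ k - 1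
      rw [Function.surjInv_eq hgbij.2 b]; exact hb
    · intro a _; exact hginj (Function.surjInv_eq hgbij.2 (g a))
    · intro b _; exact Function.surjInv_eq hgbij.2 b
  have hfin : (univ.filter fun r : Fin m => (r : ℕ) ≤ k - 1).card = k := by
    have : (univ.filter fun r : Fin m => (r : ℕ) ≤ k - 1)
        = (univ.filter fun r : Fin m => (r : ℕ) < k) := by
      apply Finset.filter_congr; intro r _; constructor <;> (intro; omega)
    rw [this, card_lt_filter hk]
  have hgj : ∀ j, (g j : ℕ) = (univ.filter fun i : Fin m => x i < x j).card := fun j => rfl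
  calc (univ.filter fun j : Fin m =>
        (univ.filter fun i : Fin m => x i < x j).card ≤ k - 1).card
      = (univ.filter fun j : Fin m => ((g j : ℕ)) ≤ k - 1).card := by
        apply congrArg; apply Finset.filter_congr; intro j _; rw [hgj]
    _ = k := by rw [hcards, hfin]

lemma perm_filter_card {m : ℕ} (σ : Equiv.Perm (Fin m)) (P : Fin m → Prop) [DecidablePred P] :
    (univ.filter fun i => P (σ i)).card = (univ.filter P).card := by
  apply Finset.card_nbij' σ σ.symm
  · intro a ha; simp only [mem_coe, mem_filter, mem_univ, true_and] at ha ⊢; exact ha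
  · intro b hb; simp only [mem_coe, mem_filter, mem_univ, true_and, Equiv.apply_symm_apply] at hb ⊢
    exact hb
  · intro a _; exact σ.symm_apply_apply a
  · intro b _; exact σ.apply_symm_apply b



/-- for exchangeable `R₁, …, R_{n+1}` and `k ∈ {1,…,n}`, with
`R^{(k)}` the k-th smallest of the first `n`, we have
`P(R_{n+1} ≤ R^{(k)}) ≥ k/(n+1)`, with equality when the variables are a.s.
distinct; and under a.s. distinctness `P(R_{n+1} > R^{(k)}) ≤ (n+1-k)/(n+1)`. -/
theorem order_statistic_coverage_bounds
    {Ω : Type*} [MeasurableSpace Ω] (μ : Measure Ω) [IsProbabilityMeasure μ]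
    (n : ℕ) (hn : 1 ≤ n) (R : Fin (n + 1) → Ω → ℝ)
    (hmeas : ∀ i, Measurable (R i))
    (hexch : ∀ σ : Equiv.Perm (Fin (n + 1)),
      Measure.map (fun ω => fun i => R (σ i) ω) μ =
        Measure.map (fun ω => fun i => R i ω) μ)
    (k : ℕ) (hk₁ : 1 ≤ k) (hkn : k ≤ n)
    (Rk : Ω → ℝ)
    (hRk : ∀ ω, Rk ω =
      ((Multiset.ofList (List.ofFn fun i : Fin n => R i.castSucc ω)).sort (· ≤ ·)).getD
        (k - 1) 0) :
    ENNReal.ofReal ((k : ℝ) / (n + 1)) ≤ μ {ω | R (Fin.last n) ω ≤ Rk ω} ∧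
    ((∀ᵐ ω ∂μ, Function.Injective fun i => R i ω) →
      μ {ω | R (Fin.last n) ω ≤ Rk ω} = ENNReal.ofReal ((k : ℝ) / (n + 1)) ∧
      μ {ω | Rk ω < R (Fin.last n) ω} ≤ ENNReal.ofReal (((n + 1 - k : ℕ) : ℝ) / (n + 1))) := by
  classical
  set X : Ω → (Fin (n + 1) → ℝ) := fun ω i => R i ω with hXdef
  have hX : Measurable X := measurable_pi_lambda _ hmeas
  set c : Fin (n + 1) → (Fin (n + 1) → ℝ) → ℕ :=
    fun j x => (univ.filter fun i : Fin (n + 1) => x i < x j).card with hcdef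
  have hcmeas : ∀ j, Measurable (c j) := by
    intro j
    have : c j = fun x => ∑ i : Fin (n + 1), if x i < x j then 1 else 0 := by
      funext x; exact Finset.card_filter _ _
    rw [this]
    apply Finset.measurable_sum
    intro i _
    exact Measurable.ite (measurableSet_lt (measurable_pi_apply i) (measurable_pi_apply j))
      measurable_const measurable_const
  set A : Fin (n + 1) → Set (Fin (n + 1) → ℝ) := fun j => {x | c j x ≤ k - 1} with hAdef
  have hAmeas : ∀ j, MeasurableSet (A j) := by
    intro j
    exact (hcmeas j) (show MeasurableSet (Set.Iic (k-1)) from measurableSet_Iic)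
  -- pointwise equivalence of the event
  have hEpt : ∀ ω, (R (Fin.last n) ω ≤ Rk ω ↔ c (Fin.last n) (X ω) ≤ k - 1) := by
    intro ω
    set s : Multiset ℝ := Multiset.map (fun i : Fin n => R i.castSucc ω) Finset.univ.val
      with hs
    have hsofn : (Multiset.ofList (List.ofFn fun i : Fin n => R i.castSucc ω)) = s := by
      rw [hs, Fin.univ_def]
      simp [List.ofFn_eq_map]
    have hcards : Multiset.card s = n := by simp [hs]
    have hp : k - 1 < Multiset.card s := by omega
    have h1 : R (Fin.last n) ω ≤ Rk ω ↔
        Multiset.countP (fun a => a < R (Fin.last n) ω) s ≤ k - 1 := by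
      rw [hRk ω, hsofn]
      exact le_sorted_getD_iff hp _
    have h2 : c (Fin.last n) (X ω)
        = Multiset.countP (fun a => a < R (Fin.last n) ω) s := by
      rw [hcdef]
      simp only [hXdef]
      rw [Finset.card_filter, Fin.sum_univ_castSucc]
      rw [if_neg (lt_irrefl _), add_zero, ← Finset.card_filter]
      rw [hs, ← cnt_eq_countP]
    rw [h1, h2]
  have hEset : {ω | R (Fin.last n) ω ≤ Rk ω} = X ⁻¹' (A (Fin.last n)) := by
    ext ω; exact hEpt ω
  have hEmeas : MeasurableSet (X ⁻¹' (A (Fin.last n))) := hX (hAmeas _)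
  -- exchangeability: all events have the same probability
  have hAeq : ∀ j, μ (X ⁻¹' A j) = μ (X ⁻¹' A (Fin.last n)) := by
    intro j
    set σ : Equiv.Perm (Fin (n + 1)) := Equiv.swap j (Fin.last n) with hσ
    have hY : Measurable (fun ω => fun i => R (σ i) ω) :=
      measurable_pi_lambda _ (fun i => hmeas (σ i))
    have h1 := congrArg (fun ν => ν (A (Fin.last n))) (hexch σ)
    rw [Measure.map_apply hY (hAmeas _), Measure.map_apply hX (hAmeas _)] at h1
    have hpre : (fun ω => fun i => R (σ i) ω) ⁻¹' A (Fin.last n) = X ⁻¹' A j := by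
      ext ω
      simp only [Set.mem_preimage, hAdef, Set.mem_setOf_eq, hcdef]
      have hσlast : σ (Fin.last n) = j := Equiv.swap_apply_right _ _
      have : (univ.filter fun i : Fin (n+1) => R (σ i) ω < R (σ (Fin.last n)) ω).card
          = (univ.filter fun i : Fin (n+1) => R i ω < R (σ (Fin.last n)) ω).card :=
        perm_filter_card σ (fun i => R i ω < R (σ (Fin.last n)) ω)
      rw [this, hσlast]
    rw [hpre] at h1
    exact h1
  -- sum identity
  have hindic : ∀ j, μ (X ⁻¹' A j)
      = ∫⁻ ω, (X ⁻¹' A j).indicator (1 : Ω → ℝ≥0∞) ω ∂μ :=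
    fun j => (lintegral_indicator_one (hX (hAmeas j))).symm
  have hkey : ((n : ℝ≥0∞) + 1) * μ (X ⁻¹' A (Fin.last n))
      = ∫⁻ ω, ((univ.filter fun j : Fin (n+1) => c j (X ω) ≤ k - 1).card : ℝ≥0∞) ∂μ := by
    calc ((n : ℝ≥0∞) + 1) * μ (X ⁻¹' A (Fin.last n))
        = ∑ _j : Fin (n + 1), μ (X ⁻¹' A (Fin.last n)) := by
          rw [Finset.sum_const, Finset.card_univ, Fintype.card_fin, nsmul_eq_mul]
          push_cast; ring
      _ = ∑ j : Fin (n + 1), μ (X ⁻¹' A j) := by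
          exact Finset.sum_congr rfl (fun j _ => (hAeq j).symm)
      _ = ∑ j : Fin (n + 1), ∫⁻ ω, (X ⁻¹' A j).indicator (1 : Ω → ℝ≥0∞) ω ∂μ :=
          Finset.sum_congr rfl (fun j _ => hindic j)
      _ = ∫⁻ ω, ∑ j : Fin (n + 1), (X ⁻¹' A j).indicator (1 : Ω → ℝ≥0∞) ω ∂μ := by
          rw [lintegral_finset_sum]
          intro j _
          exact measurable_const.indicator (hX (hAmeas j))
      _ = ∫⁻ ω, ((univ.filter fun j : Fin (n+1) => c j (X ω) ≤ k - 1).card : ℝ≥0∞) ∂μ := by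
          apply lintegral_congr
          intro ω
          rw [Finset.card_filter]
          push_cast
          apply Finset.sum_congr rfl
          intro j _
          rw [Set.indicator_apply]
          simp only [Set.mem_preimage, hAdef, Set.mem_setOf_eq, Pi.one_apply]
  -- cast lemma
  have hNne : ((n : ℝ≥0∞) + 1) ≠ 0 := by simp
  have hNtop : ((n : ℝ≥0∞) + 1) ≠ ⊤ := by simp
  have hcast : ENNReal.ofReal ((k : ℝ) / (n + 1)) = (k : ℝ≥0∞) / ((n : ℝ≥0∞) + 1) := by
    rw [ENNReal.ofReal_div_of_pos (by positivity)]
    congr 1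
    · exact ENNReal.ofReal_natCast k
    · rw [show ((n : ℝ) + 1) = ((n + 1 : ℕ) : ℝ) by push_cast; ring,
        ENNReal.ofReal_natCast]
      push_cast; ring
  -- lower bound
  have hlow : (k : ℝ≥0∞) ≤ ((n : ℝ≥0∞) + 1) * μ (X ⁻¹' A (Fin.last n)) := by
    rw [hkey]
    calc (k : ℝ≥0∞) = ∫⁻ _ω, (k : ℝ≥0∞) ∂μ := by simp
      _ ≤ _ := by
          apply lintegral_mono
          intro ω
          exact_mod_cast Nat.cast_le.2 (card_low hk₁ (by omega) (X ω))
  constructor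
  · rw [hEset, hcast, ENNReal.div_le_iff hNne hNtop, mul_comm]
    exact hlow
  · intro hinj
    have hexact : ((n : ℝ≥0∞) + 1) * μ (X ⁻¹' A (Fin.last n)) = (k : ℝ≥0∞) := by
      rw [hkey]
      have : ∫⁻ ω, ((univ.filter fun j : Fin (n+1) => c j (X ω) ≤ k - 1).card : ℝ≥0∞) ∂μ
          = ∫⁻ _ω, (k : ℝ≥0∞) ∂μ := by
        apply lintegral_congr_ae
        filter_upwards [hinj] with ω hω
        rw [card_exact hk₁ (by omega) (X ω) hω]
      rw [this]; simp
    have hEμ : μ (X ⁻¹' A (Fin.last n)) = ENNReal.ofReal ((k : ℝ) / (n + 1)) := by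
      rw [hcast]
      rw [ENNReal.eq_div_iff hNne hNtop]
      exact hexact
    refine ⟨by rw [hEset]; exact hEμ, ?_⟩
    have hcompl : {ω | Rk ω < R (Fin.last n) ω} = (X ⁻¹' A (Fin.last n))ᶜ := by
      rw [← hEset]
      ext ω
      simp only [Set.mem_setOf_eq, Set.mem_compl_iff, not_le]
    rw [hcompl, measure_compl hEmeas (measure_ne_top μ _), hEμ, measure_univ]
    rw [tsub_le_iff_right, ← ENNReal.ofReal_add (by positivity) (by positivity)]
    have : ((n + 1 - k : ℕ) : ℝ) / (n + 1) + (k : ℝ) / (n + 1) = 1 := by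
      rw [← add_div]
      rw [show ((n + 1 - k : ℕ) : ℝ) = (n : ℝ) + 1 - (k : ℝ) by
        rw [Nat.cast_sub (by omega)]; push_cast; ring]
      field_simp
      ring
    rw [this, ENNReal.ofReal_one]
end
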